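/- arXiv:2004.06177 — 6 statements merged into one kernel-verified Lean document; each statement's English description precedes it below -/
import Mathlib

section
/- Let 0 < m < 1 and let u, c be real numbers with 0 ≤ u ≤ c. Then (m/2)·(c − u)·(c^m − u^m) ≤ ∫_u^c (c^m − y^m) dy ≤ (c − u)·(c^m − u^m). -/
/-! Since `y ↦ y ^ m` is concave, on `[u, c]` its graph lies below the tangent at `c`, whose
slope `m c ^ (m - 1)` is at least `m` times the slope of the chord from `u` to `c`; integrating
`m c ^ (m - 1) (c - y) ≤ c ^ m - y ^ m` gives the lower bound. The upper bound only uses that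
the integrand is largest at `y = u`. -/

namespace Real

variable {m y c : ℝ}

lemma rpow_eq_div_rpow_mul_rpow (hy : 0 ≤ y) (hc : 0 < c) : y ^ m = (y / c) ^ m * c ^ m := by
  rw [div_rpow hy hc.le, div_mul_cancel₀ _ (rpow_pos_of_pos hc m).ne']

lemma mul_rpow_sub_one_mul_sub_le_rpow_sub_rpow (hm0 : 0 ≤ m) (hm1 : m ≤ 1) (hy : 0 ≤ y)
    (hc : 0 < c) : m * c ^ (m - 1) * (c - y) ≤ c ^ m - y ^ m := by
  have hyc : 0 ≤ y / c := div_nonneg hy hc.le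
  have bernoulli : (y / c) ^ m ≤ 1 + m * (y / c - 1) := by
    simpa using rpow_one_add_le_one_add_mul_self (s := y / c - 1) (by linarith) hm0 hm1
  rw [rpow_sub_one hc.ne', rpow_eq_div_rpow_mul_rpow (m := m) hy hc]
  calc m * (c ^ m / c) * (c - y) = c ^ m - (1 + m * (y / c - 1)) * c ^ m := by
        field_simp; ring
    _ ≤ c ^ m - (y / c) ^ m * c ^ m := by gcongr

lemma rpow_sub_rpow_le_rpow_sub_one_mul_sub (hm1 : m ≤ 1) (hy : 0 ≤ y) (hyc : y ≤ c)
    (hc : 0 < c) : c ^ m - y ^ m ≤ c ^ (m - 1) * (c - y) := by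
  have chord : y / c ≤ (y / c) ^ m :=
    self_le_rpow_of_le_one (div_nonneg hy hc.le) ((div_le_one hc).2 hyc) hm1
  rw [rpow_sub_one hc.ne', rpow_eq_div_rpow_mul_rpow (m := m) hy hc]
  calc c ^ m - (y / c) ^ m * c ^ m ≤ c ^ m - y / c * c ^ m := by gcongr
    _ = c ^ m / c * (c - y) := by field_simp

end Real

open Real intervalIntegral

lemma integral_sub_id_left (u c : ℝ) : ∫ y in u..c, (c - y) = (c - u) ^ 2 / 2 := by
  simp [integral_comp_sub_left (fun y : ℝ => y) c]

theorem stmt_4 (m u c : ℝ) (hm0 : 0 < m) (hm1 : m < 1) (hu : 0 ≤ u) (huc : u ≤ c) :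
    (m / 2) * (c - u) * (c ^ m - u ^ m) ≤ (∫ y in u..c, (c ^ m - y ^ m)) ∧
      (∫ y in u..c, (c ^ m - y ^ m)) ≤ (c - u) * (c ^ m - u ^ m) := by
  rcases huc.eq_or_lt with rfl | hlt
  · simp
  have hc : 0 < c := hu.trans_lt hlt
  have hint : IntervalIntegrable (fun y : ℝ => c ^ m - y ^ m) MeasureTheory.volume u c :=
    intervalIntegrable_const.sub (intervalIntegrable_rpow' (by linarith))
  constructor
  · have tangent : ∫ y in u..c, m * c ^ (m - 1) * (c - y) ≤ ∫ y in u..c, (c ^ m - y ^ m) :=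
      integral_mono_on huc ((by fun_prop : Continuous _).intervalIntegrable u c) hint
        fun y hy =>
          mul_rpow_sub_one_mul_sub_le_rpow_sub_rpow hm0.le hm1.le (hu.trans hy.1) hc
    rw [integral_const_mul, integral_sub_id_left] at tangent
    have chord := rpow_sub_rpow_le_rpow_sub_one_mul_sub hm1.le hu huc hc
    have hcu : 0 ≤ c - u := by linarith
    nlinarith [mul_le_mul_of_nonneg_left chord (mul_nonneg hm0.le hcu)]
  · have hmono := integral_mono_on huc hint intervalIntegrable_const fun y hy =>
      sub_le_sub_left (rpow_le_rpow hu hy.1 hm0.le) (c ^ m)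
    rwa [integral_const, smul_eq_mul] at hmono
end

section
/- Let 0 < m < 1. There exists a constant γ > 0, depending only on m, such that whenever real numbers c, ψ, u satisfy 0 ≤ c ≤ ψ, u ≥ c and u^m ≤ 4·ψ^m − 3·c^m, one has u − c ≤ γ·(ψ − c). -/
/-!
Write `K = 4 ^ (1 / m)`, so that the hypothesis gives `u ≤ K ψ`. If `ψ ≥ 2c`, then `ψ ≤ 2 (ψ - c)`
and already `u - c ≤ u ≤ 2K (ψ - c)`. If `ψ < 2c`, all of `c, ψ, u` lie in `[c, 2Kc]`, where the
derivative `m t ^ (m - 1)` of `t ^ m` is comparable to `m c ^ (m - 1)`; the two tangent-line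
bounds for the concave function `t ^ m` then turn `u ^ m - c ^ m ≤ 4 (ψ ^ m - c ^ m)` into
`u - c ≤ 4 (2K) ^ (1 - m) (ψ - c)`.
-/

open Real

lemma Real.rpow_le_rpow_add_mul_rpow_sub_one_mul {p x y : ℝ} (hp0 : 0 ≤ p) (hp1 : p ≤ 1)
    (hx : 0 < x) (hy : 0 ≤ y) : y ^ p ≤ x ^ p + p * x ^ (p - 1) * (y - x) := by
  set s := (y - x) / x
  have hs : -1 ≤ s := by
    rw [le_div_iff₀ hx]
    linarith
  have hy_eq : y = x * (1 + s) := by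
    simp only [s]
    field_simp
    ring
  calc y ^ p = x ^ p * (1 + s) ^ p := by rw [hy_eq, mul_rpow hx.le (by linarith)]
    _ ≤ x ^ p * (1 + p * s) :=
        mul_le_mul_of_nonneg_left (rpow_one_add_le_one_add_mul_self hs hp0 hp1) (by positivity)
    _ = x ^ p + p * x ^ (p - 1) * (y - x) := by
        rw [rpow_sub_one hx.ne']
        simp only [s]
        field_simp

lemma Real.le_rpow_one_div_mul_of_rpow_le_mul_rpow {p a x y : ℝ} (hp : 0 < p) (ha : 0 ≤ a)
    (hx : 0 ≤ x) (hy : 0 ≤ y) (h : x ^ p ≤ a * y ^ p) : x ≤ a ^ (1 / p) * y := by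
  rw [← rpow_le_rpow_iff hx (by positivity) hp, mul_rpow (by positivity) hy,
    ← rpow_mul ha, one_div_mul_cancel hp.ne', rpow_one]
  exact h

lemma Real.sub_le_mul_rpow_mul_sub_of_rpow_sub_rpow_le {m a L c ψ u : ℝ} (hm0 : 0 < m)
    (hm1 : m ≤ 1) (ha : 0 ≤ a) (hc : 0 < c) (hcψ : c ≤ ψ) (hcu : c ≤ u) (huL : u ≤ L * c)
    (h : u ^ m - c ^ m ≤ a * (ψ ^ m - c ^ m)) : u - c ≤ a * L ^ (1 - m) * (ψ - c) := by
  have hu : 0 < u := hc.trans_le hcu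
  have hL : 0 < L := pos_of_mul_pos_left (hu.trans_le huL) hc.le
  have hcm : 0 < m * c ^ (m - 1) := by positivity
  have hψ_tangent := rpow_le_rpow_add_mul_rpow_sub_one_mul hm0.le hm1 hc (hc.le.trans hcψ)
  have hc_tangent := rpow_le_rpow_add_mul_rpow_sub_one_mul hm0.le hm1 hu hc.le
  have hderiv : L ^ (m - 1) * c ^ (m - 1) ≤ u ^ (m - 1) := by
    rw [← mul_rpow hL.le hc.le]
    exact rpow_le_rpow_of_nonpos hu huL (by linarith)
  have hkey : m * c ^ (m - 1) * (L ^ (m - 1) * (u - c)) ≤ m * c ^ (m - 1) * (a * (ψ - c)) :=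
    calc m * c ^ (m - 1) * (L ^ (m - 1) * (u - c))
        = m * (L ^ (m - 1) * c ^ (m - 1)) * (u - c) := by ring
      _ ≤ m * u ^ (m - 1) * (u - c) := by gcongr
      _ ≤ u ^ m - c ^ m := by linarith
      _ ≤ a * (ψ ^ m - c ^ m) := h
      _ ≤ a * (m * c ^ (m - 1) * (ψ - c)) := by gcongr; linarith
      _ = m * c ^ (m - 1) * (a * (ψ - c)) := by ring
  have hLinv : L ^ (1 - m) * L ^ (m - 1) = 1 := by
    rw [← rpow_add hL, sub_add_sub_cancel', sub_self, rpow_zero]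
  calc u - c = L ^ (1 - m) * (L ^ (m - 1) * (u - c)) := by rw [← mul_assoc, hLinv, one_mul]
    _ ≤ L ^ (1 - m) * (a * (ψ - c)) :=
        mul_le_mul_of_nonneg_left (le_of_mul_le_mul_left hkey hcm) (by positivity)
    _ = a * L ^ (1 - m) * (ψ - c) := by ring

theorem stmt_9 (m : ℝ) (hm0 : 0 < m) (hm1 : m < 1) :
    ∃ γ : ℝ, 0 < γ ∧ ∀ c ψ u : ℝ, 0 ≤ c → c ≤ ψ → c ≤ u →
      u ^ m ≤ 4 * ψ ^ m - 3 * c ^ m → u - c ≤ γ * (ψ - c) := by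
  set K : ℝ := 4 ^ (1 / m)
  have hK : 0 < K := by positivity
  refine ⟨max (2 * K) (4 * (2 * K) ^ (1 - m)), lt_max_of_lt_left (by positivity),
    fun c ψ u hc hcψ hcu hu => ?_⟩
  have hψc : 0 ≤ ψ - c := sub_nonneg.2 hcψ
  have huK : u ≤ K * ψ :=
    le_rpow_one_div_mul_of_rpow_le_mul_rpow hm0 (by norm_num) (hc.trans hcu) (hc.trans hcψ)
      (by linarith [rpow_nonneg hc m])
  rcases le_or_gt (2 * c) ψ with hfar | hnear
  · calc u - c ≤ 2 * K * (ψ - c) := by nlinarith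
      _ ≤ _ := mul_le_mul_of_nonneg_right (le_max_left _ _) hψc
  · calc u - c ≤ 4 * (2 * K) ^ (1 - m) * (ψ - c) :=
          sub_le_mul_rpow_mul_sub_of_rpow_sub_rpow_le hm0 hm1.le (by norm_num) (by linarith)
            hcψ hcu (by nlinarith) (by linarith)
      _ ≤ _ := mul_le_mul_of_nonneg_right (le_max_right _ _) hψc
end

section
/- Let 0 < m < 1. There exists a constant γ > 0, depending only on m, such that for all real numbers u ≥ c ≥ 0 and ψ ≥ 0 one has (u − c)·(ψ^m − c^m)_+ ≤ (1/4)·(u − c)·(u^m − c^m) + γ·(ψ − c)_+·(ψ^m − c^m)_+. -/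
/-!
With `K = 4 ^ (1 / m)` and `γ = K`, split according to whether `u - c ≤ K (ψ - c)`. If so, the
left side is at most the `γ`-term. Otherwise `u` lies so far beyond `ψ` that
`u ^ m - c ^ m ≥ 4 (ψ ^ m - c ^ m)`: by concavity of `x ↦ x ^ m`, stretching the increment
`t = ψ - c` by the factor `K` multiplies `(c + t) ^ m - c ^ m` by at least `K ^ m = 4`.
-/

open Real Set

theorem ConcaveOn.add_le_add_of_le {𝕜 : Type*} [Field 𝕜] [LinearOrder 𝕜] [IsStrictOrderedRing 𝕜]
    {s : Set 𝕜} {f : 𝕜 → 𝕜} (hf : ConcaveOn 𝕜 s f) {x y d : 𝕜} (hx : x ∈ s)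
    (hyd : y + d ∈ s) (hxy : x ≤ y) (hd : 0 ≤ d) :
    f x + f (y + d) ≤ f (x + d) + f y := by
  rcases (add_nonneg (sub_nonneg.2 hxy) hd).eq_or_lt with hL | hL
  · obtain rfl : d = 0 := by linarith
    obtain rfl : x = y := by linarith
    simp
  -- Both `x + d` and `y` are convex combinations of the endpoints `x` and `y + d`.
  set L := y - x + d
  have ha : 0 ≤ d / L := div_nonneg hd hL.le
  have hb : 0 ≤ (y - x) / L := div_nonneg (sub_nonneg.2 hxy) hL.le
  have hsum : (y - x) / L + d / L = 1 := by rw [← add_div, div_self hL.ne']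
  have h₁ := hf.2 hx hyd hb ha hsum
  have h₂ := hf.2 hx hyd ha hb (by rw [add_comm, hsum])
  simp only [smul_eq_mul] at h₁ h₂
  have e₁ : (y - x) / L * x + d / L * (y + d) = x + d := by
    field_simp; ring
  have e₂ : d / L * x + (y - x) / L * (y + d) = y := by
    field_simp; ring
  rw [e₁] at h₁
  rw [e₂] at h₂
  linear_combination h₁ + h₂ - (f x + f (y + d)) * hsum

theorem Real.mul_rpow_add_sub_rpow_le {m c t K : ℝ} (hm₀ : 0 ≤ m) (hm₁ : m ≤ 1) (hc : 0 ≤ c)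
    (ht : 0 ≤ t) (hK : 1 ≤ K) :
    K ^ m * ((c + t) ^ m - c ^ m) ≤ (c + K * t) ^ m - c ^ m := by
  have hKc : c ≤ K * c := le_mul_of_one_le_left hc hK
  -- Shift `c ≤ c + K t` by `(K - 1) c`, then use `(K x) ^ m = K ^ m x ^ m`.
  have hconc := (Real.concaveOn_rpow hm₀ hm₁).add_le_add_of_le (x := c) (y := c + K * t)
    (d := K * c - c) hc (by simp only [mem_Ici]; nlinarith) (by nlinarith) (by linarith)
  rw [show c + K * t + (K * c - c) = K * (c + t) by ring, show c + (K * c - c) = K * c by ring,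
    mul_rpow (by linarith) (by linarith), mul_rpow (by linarith) hc] at hconc
  linarith

theorem stmt_12 (m : ℝ) (hm0 : 0 < m) (hm1 : m < 1) :
    ∃ γ : ℝ, 0 < γ ∧ ∀ u c ψ : ℝ, 0 ≤ c → c ≤ u → 0 ≤ ψ →
      (u - c) * max (ψ ^ m - c ^ m) 0 ≤
        (1 / 4) * (u - c) * (u ^ m - c ^ m) + γ * max (ψ - c) 0 * max (ψ ^ m - c ^ m) 0 := by
  set K : ℝ := 4 ^ (1 / m)
  have hKm : K ^ m = 4 := by
    rw [← rpow_mul (by norm_num), one_div_mul_cancel hm0.ne', rpow_one]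
  have hK : 1 ≤ K := one_le_rpow (by norm_num) (by positivity)
  refine ⟨K, by positivity, fun u c ψ hc hcu hψ => ?_⟩
  have hu : 0 ≤ (1 / 4) * (u - c) * (u ^ m - c ^ m) :=
    mul_nonneg (by linarith) (sub_nonneg.2 (rpow_le_rpow hc hcu hm0.le))
  rcases le_or_gt ψ c with hψc | hcψ
  · rw [max_eq_right (sub_nonpos.2 (rpow_le_rpow hψ hψc hm0.le))]
    simpa using hu
  have hψm : 0 ≤ ψ ^ m - c ^ m := sub_nonneg.2 (rpow_le_rpow hc hcψ.le hm0.le)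
  rw [max_eq_left hψm, max_eq_left (by linarith)]
  rcases le_or_gt (u - c) (K * (ψ - c)) with hsmall | hlarge
  · exact (mul_le_mul_of_nonneg_right hsmall hψm).trans (le_add_of_nonneg_left hu)
  have h4 : 4 * (ψ ^ m - c ^ m) ≤ u ^ m - c ^ m := by
    calc 4 * (ψ ^ m - c ^ m) = K ^ m * ((c + (ψ - c)) ^ m - c ^ m) := by rw [hKm, add_sub_cancel]
      _ ≤ (c + K * (ψ - c)) ^ m - c ^ m :=
        mul_rpow_add_sub_rpow_le hm0.le hm1.le hc (by linarith) hK
      _ ≤ u ^ m - c ^ m :=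
        sub_le_sub_right (rpow_le_rpow (by positivity) (by linarith) hm0.le) _
  calc (u - c) * (ψ ^ m - c ^ m) ≤ 1 / 4 * (u - c) * (u ^ m - c ^ m) := by nlinarith
    _ ≤ _ := le_add_of_nonneg_right (mul_nonneg (mul_nonneg (by positivity) (by linarith)) hψm)
end

section
/- Let 0 < m < 1. There exists a constant γ > 0, depending only on m, such that for all real numbers u ≥ c ≥ 0 and ψ ≥ 0 one has (ψ − c)_+·(u^m − c^m) ≤ (1/4)·(u − c)·(u^m − c^m) + γ·(ψ − c)_+·(ψ^m − c^m)_+. -/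
/-!
Put `A = u ^ m - c ^ m ≥ 0` and `B = (ψ ^ m - c ^ m)₊`. If `ψ - c ≤ (u - c) / 4`, the left side is
at most `(1/4) (u - c) A`. Otherwise `u - c < 4 (ψ - c)`, and concavity of `x ↦ x ^ m` (secant slopes
from `c` decrease) turns this into `A ≤ 4 B`, so the left side is at most `4 (ψ - c)₊ B`.
-/

section Concave

variable {𝕜 : Type*} [Field 𝕜] [LinearOrder 𝕜] [IsStrictOrderedRing 𝕜] {s : Set 𝕜} {f : 𝕜 → 𝕜}

theorem ConcaveOn.sub_mul_sub_le_sub_mul_sub (hf : ConcaveOn 𝕜 s f) {c ψ u : 𝕜} (hc : c ∈ s)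
    (hu : u ∈ s) (hcψ : c ≤ ψ) (hψu : ψ ≤ u) :
    (ψ - c) * (f u - f c) ≤ (u - c) * (f ψ - f c) := by
  rcases hcψ.eq_or_lt with rfl | hcψ
  · simp
  rcases hψu.eq_or_lt with rfl | hψu
  · exact le_rfl
  have h := hf.neg.secant_mono_aux1 hc hu hcψ hψu
  simp only [Pi.neg_apply] at h
  linear_combination h

theorem ConcaveOn.sub_le_mul_sub_of_sub_le_mul_sub (hf : ConcaveOn 𝕜 s f) (hmono : MonotoneOn f s)
    {c ψ u k : 𝕜} (hc : c ∈ s) (hψ : ψ ∈ s) (hu : u ∈ s) (hcψ : c ≤ ψ) (hk : 1 ≤ k)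
    (hle : u - c ≤ k * (ψ - c)) :
    f u - f c ≤ k * (f ψ - f c) := by
  have hB : 0 ≤ f ψ - f c := sub_nonneg.2 (hmono hc hψ hcψ)
  rcases le_or_gt u ψ with huψ | hψu
  · linarith [hmono hu hψ huψ, le_mul_of_one_le_left hB hk]
  have hpos : 0 < ψ - c := by
    rcases hcψ.eq_or_lt with rfl | hlt
    · linarith
    · exact sub_pos.2 hlt
  refine le_of_mul_le_mul_left ?_ hpos
  calc (ψ - c) * (f u - f c) ≤ (u - c) * (f ψ - f c) :=
        hf.sub_mul_sub_le_sub_mul_sub hc hu hcψ hψu.le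
    _ ≤ k * (ψ - c) * (f ψ - f c) := mul_le_mul_of_nonneg_right hle hB
    _ = (ψ - c) * (k * (f ψ - f c)) := by ring

theorem ConcaveOn.max_sub_mul_sub_le (hf : ConcaveOn 𝕜 s f) (hmono : MonotoneOn f s)
    {c ψ u ε : 𝕜} (hc : c ∈ s) (hψ : ψ ∈ s) (hu : u ∈ s) (hcu : c ≤ u) (hε : 0 < ε) (hε1 : ε ≤ 1) :
    max (ψ - c) 0 * (f u - f c) ≤
      ε * (u - c) * (f u - f c) + ε⁻¹ * max (ψ - c) 0 * max (f ψ - f c) 0 := by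
  have hA : 0 ≤ f u - f c := sub_nonneg.2 (hmono hc hu hcu)
  rcases le_or_gt ψ c with hψc | hcψ
  · rw [max_eq_right (sub_nonpos.2 hψc)]
    have : 0 ≤ ε * (u - c) * (f u - f c) := by
      have := sub_nonneg.2 hcu
      positivity
    simpa using this
  have hB : 0 ≤ f ψ - f c := sub_nonneg.2 (hmono hc hψ hcψ.le)
  rw [max_eq_left (sub_pos.2 hcψ).le, max_eq_left hB]
  rcases le_or_gt (ψ - c) (ε * (u - c)) with hsmall | hlarge
  · linarith [mul_le_mul_of_nonneg_right hsmall hA,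
      mul_nonneg (inv_pos.2 hε).le (mul_nonneg (sub_pos.2 hcψ).le hB)]
  · have hle : u - c ≤ ε⁻¹ * (ψ - c) := by
      rw [le_inv_mul_iff₀ hε]
      exact hlarge.le
    have hAB := hf.sub_le_mul_sub_of_sub_le_mul_sub hmono hc hψ hu hcψ.le
      (one_le_inv_iff₀.2 ⟨hε, hε1⟩) hle
    linarith [mul_le_mul_of_nonneg_left hAB (sub_pos.2 hcψ).le,
      mul_nonneg (mul_nonneg hε.le (sub_nonneg.2 hcu)) hA]

end Concave

theorem stmt_13 (m : ℝ) (hm0 : 0 < m) (hm1 : m < 1) :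
    ∃ γ : ℝ, 0 < γ ∧ ∀ u c ψ : ℝ, 0 ≤ c → c ≤ u → 0 ≤ ψ →
      max (ψ - c) 0 * (u ^ m - c ^ m) ≤
        (1 / 4) * (u - c) * (u ^ m - c ^ m) + γ * max (ψ - c) 0 * max (ψ ^ m - c ^ m) 0 := by
  refine ⟨4, by norm_num, fun u c ψ hc hcu hψ => ?_⟩
  have key := (Real.concaveOn_rpow hm0.le hm1.le).max_sub_mul_sub_le
    (Real.monotoneOn_rpow_Ici_of_exponent_nonneg hm0.le) (Set.mem_Ici.2 hc) (Set.mem_Ici.2 hψ)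
    (Set.mem_Ici.2 (hc.trans hcu)) hcu (ε := 1 / 4) (by norm_num) (by norm_num)
  norm_num at key ⊢
  exact key
end

section
/- Let 0 < m < 1. There exists a constant γ > 0, depending only on m, such that for all real numbers c ≥ 0, ψ ≥ 0 and u ≥ ψ_c, where ψ_c = max(c, ψ), one has (u − c)·(u^m − c^m) ≤ 2·(u − ψ_c)·(u^m − ψ_c^m) + γ·(ψ − c)_+·(ψ^m − c^m)_+. -/
/-!
With `a = ψ - c`, `b = ψ^m - c^m`, `A = u - ψ`, `B = u^m - ψ^m` the left-hand side is
`(a + A)(b + B)`, so it suffices that `aB + Ab ≤ AB + (γ - 1)ab`. Concavity of `x ↦ x^m` gives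
`aB ≤ Ab`, which settles the case `A ≤ a`; if `a ≤ A` and `b ≤ B` then `(A - a)(B - b) ≥ 0`.
In the remaining case `B ≤ b`, `u` cannot be far from `ψ`: `u^m ≤ 2ψ^m` forces `u ≤ 2^(1/m) ψ`,
which bounds `A` by a multiple of `a` when `c ≤ ψ/2`; otherwise compare the chord slopes of `x^m`
with its derivatives at `c ≥ ψ/2` and at `u`.
-/

open Real Set

lemma ConcaveOn.mul_sub_le_mul_sub {s : Set ℝ} {f : ℝ → ℝ} (hf : ConcaveOn ℝ s f) {x y z : ℝ}
    (hx : x ∈ s) (hz : z ∈ s) (hxy : x ≤ y) (hyz : y ≤ z) :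
    (y - x) * (f z - f y) ≤ (z - y) * (f y - f x) := by
  rcases hxy.eq_or_lt with rfl | hxy
  · simp
  rcases hyz.eq_or_lt with rfl | hyz
  · simp
  have h := hf.slope_anti_adjacent hx hz hxy hyz
  rw [div_le_div_iff₀ (sub_pos.2 hyz) (sub_pos.2 hxy)] at h
  linarith

namespace Real

lemma rpow_sub_rpow_le_mul_rpow_sub_one {m x y : ℝ} (hm0 : 0 ≤ m) (hm1 : m ≤ 1) (hx : 0 < x)
    (hxy : x ≤ y) : y ^ m - x ^ m ≤ m * x ^ (m - 1) * (y - x) := by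
  rcases hxy.eq_or_lt with rfl | hxy
  · simp
  have h := (concaveOn_rpow hm0 hm1).slope_le_of_hasDerivAt hx.le (hx.le.trans hxy.le) hxy
    (hasDerivAt_rpow_const (Or.inl hx.ne'))
  rwa [slope_def_field, div_le_iff₀ (sub_pos.2 hxy)] at h

lemma mul_rpow_sub_one_le_rpow_sub_rpow {m x y : ℝ} (hm0 : 0 ≤ m) (hm1 : m ≤ 1) (hx : 0 ≤ x)
    (hy : 0 < y) (hxy : x ≤ y) : m * y ^ (m - 1) * (y - x) ≤ y ^ m - x ^ m := by
  rcases hxy.eq_or_lt with rfl | hxy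
  · simp
  have h := (concaveOn_rpow hm0 hm1).le_slope_of_hasDerivAt hx hy.le hxy
    (hasDerivAt_rpow_const (Or.inl hy.ne'))
  rwa [slope_def_field, le_div_iff₀ (sub_pos.2 hxy)] at h

lemma le_two_rpow_inv_mul_of_rpow_le {m x y : ℝ} (hm0 : 0 < m) (hx : 0 ≤ x) (hy : 0 ≤ y)
    (h : x ^ m ≤ 2 * y ^ m) : x ≤ 2 ^ (1 / m) * y := by
  have h2 : ((2 : ℝ) ^ (1 / m)) ^ m = 2 := by
    rw [← rpow_mul zero_le_two, one_div_mul_cancel hm0.ne', rpow_one]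
  rw [← rpow_le_rpow_iff hx (by positivity) hm0, mul_rpow (by positivity) hy, h2]
  exact h

lemma sub_le_mul_sub_of_rpow_sub_rpow_le {m c ψ u : ℝ} (hm0 : 0 < m) (hm1 : m ≤ 1) (hc : 0 ≤ c)
    (hcψ : c ≤ ψ) (hψu : ψ ≤ u) (h : u ^ m - ψ ^ m ≤ ψ ^ m - c ^ m) :
    u - ψ ≤ 2 * 2 ^ (1 / m) * (ψ - c) := by
  set T : ℝ := 2 ^ (1 / m)
  have hT : 1 ≤ T := one_le_rpow one_le_two (by positivity)
  have hψ : 0 ≤ ψ := hc.trans hcψ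
  have huT : u ≤ T * ψ :=
    le_two_rpow_inv_mul_of_rpow_le hm0 (hψ.trans hψu) hψ (by linarith [rpow_nonneg hc m])
  rcases le_or_gt (2 * c) ψ with hc2 | hc2
  · nlinarith
  have hc0 : 0 < c := by linarith
  have hu0 : 0 < u := hc0.trans_le (hcψ.trans hψu)
  have hcu : u / (2 * T) ≤ c := by
    rw [div_le_iff₀ (by positivity)]
    nlinarith
  -- `c ≥ u / 2T` turns into `c^(m-1) ≤ 2T u^(m-1)` because `m - 1 ∈ [-1, 0]`.
  have hslope : c ^ (m - 1) ≤ 2 * T * u ^ (m - 1) := calc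
    c ^ (m - 1) ≤ (u / (2 * T)) ^ (m - 1) :=
      rpow_le_rpow_of_nonpos (by positivity) hcu (by linarith)
    _ = u ^ (m - 1) / (2 * T) ^ (m - 1) := div_rpow hu0.le (by positivity) _
    _ ≤ u ^ (m - 1) / (2 * T) ^ (-1 : ℝ) := by
      gcongr
      exacts [by linarith, by linarith]
    _ = 2 * T * u ^ (m - 1) := by rw [rpow_neg_one, div_inv_eq_mul, mul_comm]
  have hlow := mul_rpow_sub_one_le_rpow_sub_rpow hm0.le hm1 hψ hu0 hψu
  have hup := rpow_sub_rpow_le_mul_rpow_sub_one hm0.le hm1 hc0 hcψ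
  have hmu : 0 < m * u ^ (m - 1) := mul_pos hm0 (rpow_pos_of_pos hu0 _)
  refine le_of_mul_le_mul_left ?_ hmu
  nlinarith [mul_le_mul_of_nonneg_left hslope (mul_nonneg hm0.le (sub_nonneg.2 hcψ))]

end Real

lemma mul_add_mul_le_of_concave_of_growth {a b A B K : ℝ} (ha : 0 ≤ a) (hb : 0 ≤ b)
    (hA : 0 ≤ A) (hB : 0 ≤ B) (hK : 1 ≤ K) (hconc : a * B ≤ A * b) (hgrowth : B ≤ b → A ≤ K * a) :
    a * B + A * b ≤ A * B + (K + 1) * (a * b) := by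
  rcases le_total A a with hAa | haA
  · nlinarith [mul_le_mul_of_nonneg_right hAa hb, mul_nonneg hA hB, mul_nonneg ha hb]
  rcases le_total b B with hbB | hBb
  · nlinarith [mul_nonneg (sub_nonneg.2 haA) (sub_nonneg.2 hbB), mul_nonneg ha hb]
  · nlinarith [mul_le_mul_of_nonneg_right (hgrowth hBb) hb, mul_le_mul_of_nonneg_left hBb ha,
      mul_nonneg hA hB]

lemma sub_mul_rpow_sub_rpow_le {m c ψ u : ℝ} (hm0 : 0 < m) (hm1 : m ≤ 1) (hc : 0 ≤ c)
    (hcψ : c ≤ ψ) (hψu : ψ ≤ u) :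
    (u - c) * (u ^ m - c ^ m) ≤
      2 * (u - ψ) * (u ^ m - ψ ^ m) + (2 * 2 ^ (1 / m) + 2) * ((ψ - c) * (ψ ^ m - c ^ m)) := by
  have hψ : 0 ≤ ψ := hc.trans hcψ
  have hconc := (concaveOn_rpow hm0.le hm1).mul_sub_le_mul_sub hc (hψ.trans hψu) hcψ hψu
  have key := mul_add_mul_le_of_concave_of_growth (sub_nonneg.2 hcψ)
    (sub_nonneg.2 (rpow_le_rpow hc hcψ hm0.le)) (sub_nonneg.2 hψu)
    (sub_nonneg.2 (rpow_le_rpow hψ hψu hm0.le))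
    (by nlinarith [one_le_rpow (one_le_two : (1 : ℝ) ≤ 2) (by positivity : 0 ≤ 1 / m)]) hconc
    (sub_le_mul_sub_of_rpow_sub_rpow_le hm0 hm1 hc hcψ hψu)
  nlinarith [mul_nonneg (sub_nonneg.2 hψu) (sub_nonneg.2 (rpow_le_rpow hψ hψu hm0.le))]

theorem stmt_14 (m : ℝ) (hm0 : 0 < m) (hm1 : m < 1) :
    ∃ γ : ℝ, 0 < γ ∧ ∀ c ψ u : ℝ, 0 ≤ c → 0 ≤ ψ → max c ψ ≤ u →
      (u - c) * (u ^ m - c ^ m) ≤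
        2 * (u - max c ψ) * (u ^ m - (max c ψ) ^ m)
          + γ * max (ψ - c) 0 * max (ψ ^ m - c ^ m) 0 := by
  refine ⟨2 * 2 ^ (1 / m) + 2, by positivity, fun c ψ u hc hψ hu => ?_⟩
  rcases le_total ψ c with hψc | hcψ
  · rw [max_eq_left hψc] at hu ⊢
    rw [max_eq_right (sub_nonpos.2 hψc)]
    nlinarith [mul_nonneg (sub_nonneg.2 hu) (sub_nonneg.2 (rpow_le_rpow hc hu hm0.le))]
  · rw [max_eq_right hcψ] at hu ⊢
    rw [max_eq_left (sub_nonneg.2 hcψ), max_eq_left (sub_nonneg.2 (rpow_le_rpow hc hcψ hm0.le)),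
      mul_assoc _ (ψ - c)]
    exact sub_mul_rpow_sub_rpow_le hm0 hm1.le hc hcψ hu
end

section
/- Let (X, μ) be a measure space, let f : X → [0,∞] be measurable, and let k > 0 and ε > 0 be real numbers. Then ∫_0^k λ^{ε−1} · ( ∫_{{x : f(x) > λ}} f dμ ) dλ = (1/ε) · ∫_X f · (min(f, k))^ε dμ, where all integrals are Lebesgue integrals with values in the extended nonnegative reals. -/
/-!
Apply the layer-cake formula `∫ F^ε dν = ε ∫_0^∞ t^(ε-1) ν{F > t} dt` to the truncation
`F = min f k` and the measure `ν = f μ`. For `0 < t` the level set `{F > t}` is `{f > t}` when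
`t < k` and empty otherwise, so the outer integral only runs over `(0, k)`.
-/

open MeasureTheory ENNReal

theorem ENNReal.lt_toReal_min_ofReal_iff {a : ℝ≥0∞} {t k : ℝ} (ht : 0 ≤ t) :
    t < (min a (ENNReal.ofReal k)).toReal ↔ ENNReal.ofReal t < a ∧ t < k := by
  rw [← ofReal_lt_iff_lt_toReal ht ((min_le_right _ _).trans_lt ofReal_lt_top).ne, lt_min_iff,
    ofReal_lt_ofReal_iff']
  exact and_congr_right fun _ => and_iff_left_of_imp ht.trans_lt

theorem ENNReal.ofReal_toReal_rpow {a : ℝ≥0∞} (ha : a ≠ ∞) {p : ℝ} (hp : 0 ≤ p) :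
    ENNReal.ofReal (a.toReal ^ p) = a ^ p := by
  rw [toReal_rpow, ofReal_toReal (rpow_ne_top_of_nonneg hp ha)]

theorem MeasureTheory.lintegral_mul_rpow_eq_lintegral_setLIntegral_lt_mul
    {X : Type*} [MeasurableSpace X] (μ : Measure X) {g : X → ℝ≥0∞} (hg : Measurable g)
    {h : X → ℝ} (h_nn : 0 ≤ h) (hh : Measurable h) {p : ℝ} (hp : 0 < p) :
    ∫⁻ x, g x * ENNReal.ofReal (h x ^ p) ∂μ =
      ENNReal.ofReal p * ∫⁻ t in Set.Ioi 0,
        (∫⁻ x in {x | t < h x}, g x ∂μ) * ENNReal.ofReal (t ^ (p - 1)) := by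
  have layer := lintegral_rpow_eq_lintegral_meas_lt_mul (μ.withDensity g)
    (Filter.Eventually.of_forall h_nn) hh.aemeasurable hp
  rw [lintegral_withDensity_eq_lintegral_mul μ hg (hh.pow_const p).ennreal_ofReal] at layer
  simpa only [Pi.mul_apply, withDensity_apply g (measurableSet_lt measurable_const hh)] using layer

theorem stmt_19_general {X : Type*} [MeasurableSpace X] (μ : Measure X)
    (f : X → ℝ≥0∞) (hf : Measurable f) (k ε : ℝ) (hε : 0 < ε) :
    (∫⁻ l in Set.Ioo (0 : ℝ) k, ENNReal.ofReal (l ^ (ε - 1)) *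
        (∫⁻ x in {x | ENNReal.ofReal l < f x}, f x ∂μ)) =
      ENNReal.ofReal (1 / ε) * ∫⁻ x, f x * (min (f x) (ENNReal.ofReal k)) ^ ε ∂μ := by
  set F : X → ℝ := fun x => (min (f x) (ENNReal.ofReal k)).toReal
  have layer := lintegral_mul_rpow_eq_lintegral_setLIntegral_lt_mul μ hf (h := F)
    (fun x => toReal_nonneg) (hf.min measurable_const).ennreal_toReal hε
  have truncate : ∀ t ∈ Set.Ioi (0 : ℝ),
      (∫⁻ x in {x | t < F x}, f x ∂μ) * ENNReal.ofReal (t ^ (ε - 1)) =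
        (Set.Iio k).indicator (fun l => ENNReal.ofReal (l ^ (ε - 1)) *
          ∫⁻ x in {x | ENNReal.ofReal l < f x}, f x ∂μ) t := by
    intro t ht
    simp only [F, lt_toReal_min_ofReal_iff (le_of_lt ht), Set.indicator]
    by_cases htk : t < k
    · simp [htk, mul_comm]
    · simp [htk]
  calc _ = ∫⁻ t in Set.Ioi 0,
        (∫⁻ x in {x | t < F x}, f x ∂μ) * ENNReal.ofReal (t ^ (ε - 1)) := by
        rw [setLIntegral_congr_fun measurableSet_Ioi truncate,
          setLIntegral_indicator measurableSet_Iio, Set.inter_comm, Set.Ioi_inter_Iio]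
    _ = ENNReal.ofReal (1 / ε) * ∫⁻ x, f x * ENNReal.ofReal (F x ^ ε) ∂μ := by
        rw [layer, ← mul_assoc, ← ofReal_mul (by positivity), one_div_mul_cancel hε.ne',
          ofReal_one, one_mul]
    _ = _ := by
        simp only [F, ofReal_toReal_rpow ((min_le_right _ _).trans_lt ofReal_lt_top).ne hε.le]

theorem stmt_19 {X : Type*} [MeasurableSpace X] (μ : Measure X)
    (f : X → ℝ≥0∞) (hf : Measurable f) (k ε : ℝ) (hk : 0 < k) (hε : 0 < ε) :
    (∫⁻ l in Set.Ioo (0 : ℝ) k, ENNReal.ofReal (l ^ (ε - 1)) *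
        (∫⁻ x in {x | ENNReal.ofReal l < f x}, f x ∂μ)) =
      ENNReal.ofReal (1 / ε) * ∫⁻ x, f x * (min (f x) (ENNReal.ofReal k)) ^ ε ∂μ :=
  stmt_19_general μ f hf k ε hε
end
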